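/- Let I be a two-valued interpretation of an extended logic program P. Then an objective literal L is in Γ_P(I) if and only if there exists an argument A for P with conclusion L such that every assumption of A is in I (i.e., for every 'not L'' ∈ assm(A), L' ∉ I). -/

import Mathlib

/-- Objective literals: atoms and their explicit negations. -/
inductive Lit : Type where
  | pos : String → Lit
  | neg : String → Lit
deriving DecidableEq

/-- Explicit negation of an objective literal (`¬¬L = L`). -/
def Lit.compl : Lit → Lit
  | .pos a => .neg a
  | .neg a => .pos a

/-- A rule `head ← pos, not neg` of an extended logic program:
`pos` are the objective body literals and `neg` the default-negated ones. -/
structure Rule where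
  head : Lit
  pos : List Lit
  neg : List Lit

/-- An extended logic program is a set of rules. -/
abbrev Program := Set Rule

/-- An argument for `P`: a finite sequence of rules of `P` such that every
objective literal in the body of a rule is the head of a later rule. -/
def IsArg (P : Program) (A : List Rule) : Prop :=
  (∀ r ∈ A, r ∈ P) ∧
  ∀ i : Fin A.length, ∀ L ∈ (A.get i).pos,
    ∃ k : Fin A.length, i < k ∧ (A.get k).head = L

/-- The conclusions of an argument: the heads of its rules. -/
def conc (A : List Rule) : Set Lit := {L | ∃ r ∈ A, r.head = L}

/-- The assumptions of an argument: the objective literals `L` such that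
`not L` occurs in the body of one of its rules. -/
def assm (A : List Rule) : Set Lit := {L | ∃ r ∈ A, L ∈ r.neg}

/-- `A` is a minimal argument for `L`: no proper subargument of `A` has
conclusion `L`. -/
def MinimalArgFor (P : Program) (A : List Rule) (L : Lit) : Prop :=
  IsArg P A ∧ L ∈ conc A ∧
  ∀ B : List Rule, B.Sublist A → B ≠ A → IsArg P B → L ∉ conc B

/-- The set of minimal arguments of `P`. -/
def Args (P : Program) : Type := {A : List Rule // ∃ L, MinimalArgFor P A L}

/-- `A` undercuts `B`: some conclusion `L` of `A` is an assumption `not L` of `B`. -/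
def undercuts {P : Program} (A B : Args P) : Prop :=
  ∃ L, L ∈ conc A.1 ∧ L ∈ assm B.1

/-- `A` rebuts `B`: some conclusion `L` of `A` has `¬L` a conclusion of `B`. -/
def rebuts {P : Program} (A B : Args P) : Prop :=
  ∃ L, L ∈ conc A.1 ∧ L.compl ∈ conc B.1

/-- `A` attacks `B` iff `A` undercuts or rebuts `B`. -/
def attacks {P : Program} (A B : Args P) : Prop := undercuts A B ∨ rebuts A B

/-- `A` defeats `B` iff `A` undercuts `B`, or `A` rebuts `B` and `B` does not
undercut `A`. -/
def defeats {P : Program} (A B : Args P) : Prop :=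
  undercuts A B ∨ (rebuts A B ∧ ¬ undercuts B A)

/-- `A` strongly undercuts `B` iff `A` undercuts `B` and `B` does not undercut `A`. -/
def sundercuts {P : Program} (A B : Args P) : Prop :=
  undercuts A B ∧ ¬ undercuts B A

/-- The set of `x/y`-acceptable arguments with respect to `S`. -/
def Facc {Arg : Type*} (x y : Arg → Arg → Prop) (S : Set Arg) : Set Arg :=
  {A | ∀ B, x B A → ∃ C ∈ S, y C B}

theorem Facc_mono {Arg : Type*} (x y : Arg → Arg → Prop) : Monotone (Facc x y) := by
  intro S T hST A hA B hB
  obtain ⟨C, hC, hCB⟩ := hA B hB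
  exact ⟨C, hST hC, hCB⟩

/-- `Facc` as an order homomorphism. -/
def Fhom {Arg : Type*} (x y : Arg → Arg → Prop) : Set Arg →o Set Arg :=
  ⟨Facc x y, Facc_mono x y⟩

/-- The set of `x/y`-justified arguments. -/
def Jlfp {Arg : Type*} (x y : Arg → Arg → Prop) : Set Arg :=
  OrderHom.lfp (Fhom x y)

/-- Derivability in the least model of the GL-transformation `P/I`:
rules whose default-negated body literals avoid `I` may fire. -/
inductive GammaDeriv (P : Program) (I : Set Lit) : Lit → Prop where
  | step (r : Rule) (hr : r ∈ P) (hneg : ∀ L ∈ r.neg, L ∉ I)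
      (hpos : ∀ L ∈ r.pos, GammaDeriv P I L) : GammaDeriv P I r.head

/-- The Gelfond–Lifschitz operator `Γ_P`. -/
def Gamma (P : Program) (I : Set Lit) : Set Lit := {L | GammaDeriv P I L}

/-- The semi-normal version of `P`: each rule `L ← Body` becomes
`L ← not ¬L, Body`. -/
def seminormal (P : Program) : Program :=
  {r' | ∃ r ∈ P, r' = ⟨r.head, r.pos, r.head.compl :: r.neg⟩}

/-- `Γ_s`, the `Γ` operator of the semi-normal program. -/
def GammaS (P : Program) (I : Set Lit) : Set Lit := Gamma (seminormal P) I

theorem Gamma_anti (P : Program) : ∀ {I I' : Set Lit}, I ⊆ I' → Gamma P I' ⊆ Gamma P I := by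
  intro I I' h L hL
  induction hL with
  | step r hr hneg hpos ih =>
      exact GammaDeriv.step r hr (fun L hL hI => hneg L hL (h hI)) ih

/-- The monotone operator `I ↦ Γ_P (Γ_Q I)`. -/
def GammaComp (P Q : Program) : Set Lit →o Set Lit :=
  ⟨fun I => Gamma P (Gamma Q I), fun _ _ h => Gamma_anti P (Gamma_anti Q h)⟩

/-!
An argument is a derivation in the least model of `P/I` laid out as a list, read from the
end: each rule fires once the heads of the rules after it supply its positive body. Since
arguments are closed under concatenation, a derivation tree flattens into a single argument;
conversely, induction along the list rebuilds the derivation, rule by rule.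
-/

@[simp]
theorem conc_nil : conc [] = ∅ := by
  simp [conc]

@[simp]
theorem conc_cons (r : Rule) (A : List Rule) : conc (r :: A) = insert r.head (conc A) := by
  ext L
  simp [conc, eq_comm]

@[simp]
theorem conc_append (A B : List Rule) : conc (A ++ B) = conc A ∪ conc B := by
  ext L
  simp [conc, or_and_right, exists_or]

@[simp]
theorem assm_nil : assm [] = ∅ := by
  simp [assm]

@[simp]
theorem assm_cons (r : Rule) (A : List Rule) : assm (r :: A) = {L | L ∈ r.neg} ∪ assm A := by
  ext L
  simp [assm]

@[simp]
theorem assm_append (A B : List Rule) : assm (A ++ B) = assm A ∪ assm B := by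
  ext L
  simp [assm, or_and_right, exists_or]

namespace IsArg

variable {P : Program}

theorem nil : IsArg P [] := ⟨by simp, fun i => i.elim0⟩

theorem cons_iff {r : Rule} {B : List Rule} :
    IsArg P (r :: B) ↔ r ∈ P ∧ (∀ L ∈ r.pos, L ∈ conc B) ∧ IsArg P B := by
  constructor
  · rintro ⟨hP, hpos⟩
    refine ⟨hP r List.mem_cons_self, fun L hL => ?_,
      fun s hs => hP s (List.mem_cons_of_mem r hs), fun i L hL => ?_⟩
    · obtain ⟨k, hk, rfl⟩ := hpos 0 L hL
      obtain ⟨k', rfl⟩ := Fin.exists_succ_eq.2 (Fin.pos_iff_ne_zero.1 hk)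
      exact ⟨B.get k', List.get_mem _ _, rfl⟩
    · obtain ⟨k, hk, rfl⟩ := hpos i.succ L hL
      obtain ⟨k', rfl⟩ := Fin.exists_succ_eq.2 (ne_of_gt ((Fin.succ_pos i).trans hk))
      exact ⟨k', Fin.succ_lt_succ_iff.1 hk, rfl⟩
  · rintro ⟨hr, hpos, hBP, hB⟩
    refine ⟨List.forall_mem_cons.2 ⟨hr, hBP⟩, Fin.cases (fun L hL => ?_) (fun i L hL => ?_)⟩
    · obtain ⟨s, hs, rfl⟩ := hpos L hL
      obtain ⟨k, rfl⟩ := List.get_of_mem hs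
      exact ⟨k.succ, Fin.succ_pos k, rfl⟩
    · obtain ⟨k, hk, rfl⟩ := hB i L hL
      exact ⟨k.succ, Fin.succ_lt_succ_iff.2 hk, rfl⟩

theorem append {A B : List Rule} (hA : IsArg P A) (hB : IsArg P B) : IsArg P (A ++ B) := by
  induction A with
  | nil => exact hB
  | cons r A ih =>
    obtain ⟨hr, hpos, hA⟩ := cons_iff.1 hA
    rw [List.cons_append, cons_iff, conc_append]
    exact ⟨hr, fun L hL => Or.inl (hpos L hL), ih hA⟩

theorem conc_subset_gamma {I : Set Lit} {A : List Rule} (hA : IsArg P A)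
    (hI : ∀ L ∈ assm A, L ∉ I) : conc A ⊆ Gamma P I := by
  induction A with
  | nil => simp
  | cons r A ih =>
    obtain ⟨hr, hpos, hA⟩ := cons_iff.1 hA
    simp only [assm_cons, Set.mem_union, Set.mem_ofPred_eq] at hI
    have hAI : conc A ⊆ Gamma P I := ih hA fun L hL => hI L (Or.inr hL)
    rw [conc_cons, Set.insert_subset_iff]
    exact ⟨GammaDeriv.step r hr (fun L hL => hI L (Or.inl hL)) fun L hL => hAI (hpos L hL), hAI⟩

end IsArg

theorem exists_isArg_forall_mem_conc {P : Program} {I : Set Lit} (ls : List Lit)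
    (h : ∀ L ∈ ls, ∃ A, IsArg P A ∧ L ∈ conc A ∧ ∀ L' ∈ assm A, L' ∉ I) :
    ∃ A, IsArg P A ∧ (∀ L ∈ ls, L ∈ conc A) ∧ ∀ L' ∈ assm A, L' ∉ I := by
  induction ls with
  | nil => exact ⟨[], IsArg.nil, by simp, by simp⟩
  | cons L ls ih =>
    obtain ⟨A, hA, hLA, hAI⟩ := h L List.mem_cons_self
    obtain ⟨B, hB, hlsB, hBI⟩ := ih fun L' hL' => h L' (List.mem_cons_of_mem L hL')
    refine ⟨A ++ B, hA.append hB, ?_, ?_⟩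
    · simpa [hLA] using fun L' hL' => Or.inr (hlsB L' hL')
    · simpa using fun L' hL' => hL'.elim (hAI L') (hBI L')

theorem exists_isArg_of_mem_gamma {P : Program} {I : Set Lit} {L : Lit} (hL : L ∈ Gamma P I) :
    ∃ A, IsArg P A ∧ L ∈ conc A ∧ ∀ L' ∈ assm A, L' ∉ I := by
  induction hL with
  | step r hr hneg _ ih =>
    obtain ⟨B, hB, hposB, hBI⟩ := exists_isArg_forall_mem_conc r.pos ih
    refine ⟨r :: B, IsArg.cons_iff.2 ⟨hr, hposB, hB⟩, by simp, ?_⟩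
    simpa using fun L' hL' => hL'.elim (hneg L') (hBI L')

/-- For a two-valued interpretation (given by its set `I` of true objective
literals), `L ∈ Γ_P(I)` iff there is an argument for `L` all of whose
assumptions hold in the interpretation. -/
theorem gamma_iff_argument (P : Program) (I : Set Lit) (L : Lit) :
    L ∈ Gamma P I ↔
      ∃ A : List Rule, IsArg P A ∧ L ∈ conc A ∧ ∀ L' ∈ assm A, L' ∉ I :=
  ⟨exists_isArg_of_mem_gamma, fun ⟨_, hA, hLA, hAI⟩ => hA.conc_subset_gamma hAI hLA⟩
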